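/- arXiv:1605.03950 — 10 statements merged into one kernel-verified Lean document; each statement's English description precedes it below -/
import Mathlib

section
/- If φ : [0,∞) → [0,∞) is upper semicontinuous and satisfies φ(0) = 0 and φ(t) < t for all t > 0 (monotonicity is not assumed), then for every t ≥ 0 the composite iterates satisfy φⁿ(t) → 0 as n → ∞. -/
open Metric Set Function Filter Topology

def IsComparisonFn (φ : ℝ → ℝ) : Prop :=
  MonotoneOn φ (Set.Ici 0) ∧ UpperSemicontinuousOn φ (Set.Ici 0) ∧
    (∀ t, 0 ≤ t → 0 ≤ φ t) ∧ φ 0 = 0 ∧ ∀ t, 0 < t → φ t < t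

def orbitOf {X : Type*} (T : X → X) (x : X) : Set X :=
  Set.range fun n : ℕ => T^[n] x

def dorbitOf {X : Type*} (T : X → X) (x y : X) : Set X :=
  orbitOf T x ∪ orbitOf T y

def IsWeakQuasicontraction {X : Type*} [MetricSpace X] (φ : ℝ → ℝ) (T : X → X) : Prop :=
  (∀ x : X, Bornology.IsBounded (orbitOf T x)) ∧
    ∀ x y : X, dist (T x) (T y) ≤ φ (Metric.diam (dorbitOf T x y))

def IsStrongQuasicontraction {X : Type*} [MetricSpace X] (φ : ℝ → ℝ) (T : X → X) : Prop :=
  ∀ x y : X, dist (T x) (T y) ≤ φ (Metric.diam {x, y, T x, T y})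

theorem iterates_tendsto_zero_of_usc (φ : ℝ → ℝ)
    (husc : UpperSemicontinuousOn φ (Set.Ici 0))
    (hnonneg : ∀ t, 0 ≤ t → 0 ≤ φ t)
    (h0 : φ 0 = 0) (hlt : ∀ t, 0 < t → φ t < t) :
    ∀ t : ℝ, 0 ≤ t → Filter.Tendsto (fun n : ℕ => φ^[n] t) Filter.atTop (nhds 0) := by
  intro t ht
  set a : ℕ → ℝ := fun n => φ^[n] t with ha
  have hstep : ∀ n, a (n + 1) = φ (a n) := by
    intro n; simp [ha, Function.iterate_succ_apply']
  have hpos : ∀ n, 0 ≤ a n := by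
    intro n; induction n with
    | zero => simpa [ha]
    | succ n ih => rw [hstep]; exact hnonneg _ ih
  have hanti : Antitone a := by
    apply antitone_nat_of_succ_le
    intro n
    rw [hstep]
    rcases eq_or_lt_of_le (hpos n) with h | h
    · rw [← h, h0]
    · exact (hlt _ h).le
  have hbdd : BddBelow (Set.range a) := ⟨0, by rintro x ⟨n, rfl⟩; exact hpos n⟩
  set L := ⨅ n, a n with hL
  have htend : Tendsto a atTop (𝓝 L) := tendsto_atTop_ciInf hanti hbdd
  have hLle : ∀ n, L ≤ a n := fun n => ciInf_le hbdd n
  have hL0 : 0 ≤ L := le_ciInf hpos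
  rcases eq_or_lt_of_le hL0 with h | h
  · rwa [← h] at htend
  · exfalso
    have hφL : φ L < L := hlt L h
    have hmem : ∀ᶠ n in atTop, a n ∈ Set.Ici (0 : ℝ) := Eventually.of_forall hpos
    have htend' : Tendsto a atTop (𝓝[Set.Ici (0:ℝ)] L) :=
      tendsto_nhdsWithin_of_tendsto_nhds_of_eventually_within a htend hmem
    have hev : ∀ᶠ n in atTop, φ (a n) < (φ L + L) / 2 := htend' (husc L hL0 ((φ L + L) / 2) (by linarith))
    rcases hev.exists with ⟨n, hn⟩
    have := hLle (n + 1)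
    rw [hstep] at this
    linarith
end

section
/- Let (X,d) be a metric space, φ a comparison function, and T : X → X a weak φ-quasicontraction. Then for all x, y ∈ X, the diameter of the double orbit of the images satisfies diam 𝒪(Tx,Ty) ≤ φ(diam 𝒪(x,y)). -/
open Metric Set Function Filter Topology

lemma orbit_iterate_subset {X : Type*} (T : X → X) (x : X) (k : ℕ) :
    orbitOf T (T^[k] x) ⊆ orbitOf T x := by
  rintro _ ⟨n, rfl⟩
  exact ⟨n + k, by simp [Function.iterate_add_apply]⟩

lemma dorbit_subset {X : Type*} (T : X → X) (x y a b : X)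
    (ha : a ∈ dorbitOf T x y) (hb : b ∈ dorbitOf T x y) :
    dorbitOf T a b ⊆ dorbitOf T x y := by
  have key : ∀ c, c ∈ dorbitOf T x y → orbitOf T c ⊆ dorbitOf T x y := by
    rintro c (⟨k, rfl⟩ | ⟨k, rfl⟩)
    · exact fun z hz => Or.inl (orbit_iterate_subset T x k hz)
    · exact fun z hz => Or.inr (orbit_iterate_subset T y k hz)
  exact Set.union_subset (key a ha) (key b hb)

theorem diam_dorbit_image_le {X : Type*} [MetricSpace X] (φ : ℝ → ℝ) (T : X → X)
    (hφ : IsComparisonFn φ) (hT : IsWeakQuasicontraction φ T) :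
    ∀ x y : X, Metric.diam (dorbitOf T (T x) (T y)) ≤ φ (Metric.diam (dorbitOf T x y)) := by
  intro x y
  obtain ⟨hmono, _, hnonneg, _, _⟩ := hφ
  obtain ⟨hbdd, hcontr⟩ := hT
  have hbig : Bornology.IsBounded (dorbitOf T x y) := (hbdd x).union (hbdd y)
  apply Metric.diam_le_of_forall_dist_le (hnonneg _ Metric.diam_nonneg)
  rintro u hu v hv
  -- every element of dorbitOf T (T x) (T y) is T applied to an element of dorbitOf T x y
  have mem : ∀ w, w ∈ dorbitOf T (T x) (T y) → ∃ a, a ∈ dorbitOf T x y ∧ T a = w := by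
    rintro w (⟨n, rfl⟩ | ⟨n, rfl⟩)
    · exact ⟨T^[n] x, Or.inl ⟨n, rfl⟩, (Function.iterate_succ_apply' T n x).symm ▸
        (Function.Commute.iterate_self T n x).symm⟩
    · exact ⟨T^[n] y, Or.inr ⟨n, rfl⟩, (Function.Commute.iterate_self T n y).symm⟩
  obtain ⟨a, ha, rfl⟩ := mem u hu
  obtain ⟨b, hb, rfl⟩ := mem v hv
  calc dist (T a) (T b) ≤ φ (Metric.diam (dorbitOf T a b)) := hcontr a b
    _ ≤ φ (Metric.diam (dorbitOf T x y)) := by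
        apply hmono Metric.diam_nonneg Metric.diam_nonneg
        exact Metric.diam_mono (dorbit_subset T x y a b ha hb) hbig
end

section
/- Let (X,d) be a metric space, φ a comparison function, and T : X → X a weak φ-quasicontraction. If for some x, x₀ ∈ X the sequence of iterates Tⁿx converges to x₀, then the sequence Tⁿx₀ also converges to x₀. -/
open Metric Set Function Filter Topology

lemma self_mem_orbitOf {X : Type*} (T : X → X) (x : X) : x ∈ orbitOf T x :=
  ⟨0, rfl⟩

lemma orbitOf_iterate_subset {X : Type*} (T : X → X) (x : X) (m : ℕ) :
    orbitOf T (T^[m] x) ⊆ orbitOf T x := by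
  rintro _ ⟨k, rfl⟩
  exact ⟨k + m, by simp [Function.iterate_add_apply]⟩

lemma dorbit_bounded {X : Type*} [MetricSpace X] {φ : ℝ → ℝ} {T : X → X}
    (hT : IsWeakQuasicontraction φ T) (a b : X) :
    Bornology.IsBounded (dorbitOf T a b) :=
  (hT.1 a).union (hT.1 b)

/-- Key contraction step on double orbits. -/
lemma diam_dorbit_step {X : Type*} [MetricSpace X] {φ : ℝ → ℝ} {T : X → X}
    (hφ : IsComparisonFn φ) (hT : IsWeakQuasicontraction φ T) (a b : X) :
    Metric.diam (dorbitOf T (T a) (T b)) ≤ φ (Metric.diam (dorbitOf T a b)) := by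
  obtain ⟨hmono, _, hnn, _, _⟩ := hφ
  have hDnn : 0 ≤ Metric.diam (dorbitOf T a b) := Metric.diam_nonneg
  apply Metric.diam_le_of_forall_dist_le (hnn _ hDnn)
  have key : ∀ u v : X, u ∈ dorbitOf T a b → v ∈ dorbitOf T a b →
      dist (T u) (T v) ≤ φ (Metric.diam (dorbitOf T a b)) := by
    intro u v hu hv
    refine (hT.2 u v).trans (hmono Metric.diam_nonneg hDnn ?_)
    apply Metric.diam_mono ?_ (dorbit_bounded hT a b)
    have hsub : ∀ w : X, w ∈ dorbitOf T a b → orbitOf T w ⊆ dorbitOf T a b := by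
      rintro w (⟨m, rfl⟩ | ⟨m, rfl⟩)
      · exact (orbitOf_iterate_subset T a m).trans Set.subset_union_left
      · exact (orbitOf_iterate_subset T b m).trans Set.subset_union_right
    exact Set.union_subset (hsub u hu) (hsub v hv)
  intro p hp q hq
  simp only [dorbitOf, orbitOf, Set.mem_union, Set.mem_range] at hp hq
  rcases hp with ⟨m, rfl⟩ | ⟨m, rfl⟩ <;> rcases hq with ⟨k, rfl⟩ | ⟨k, rfl⟩ <;>
    · rw [← Function.iterate_succ_apply, Function.iterate_succ_apply',
        ← Function.iterate_succ_apply, Function.iterate_succ_apply']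
      exact key _ _ (by first | exact Or.inl ⟨m, rfl⟩ | exact Or.inr ⟨m, rfl⟩)
        (by first | exact Or.inl ⟨k, rfl⟩ | exact Or.inr ⟨k, rfl⟩)

lemma comparison_iterate_nonneg {φ : ℝ → ℝ} (hφ : IsComparisonFn φ)
    {t : ℝ} (ht : 0 ≤ t) : ∀ n : ℕ, 0 ≤ φ^[n] t := by
  intro n; induction n with
  | zero => exact ht
  | succ n ih => rw [Function.iterate_succ_apply']; exact hφ.2.2.1 _ ih

lemma comparison_iterate_tendsto_zero {φ : ℝ → ℝ} (hφ : IsComparisonFn φ)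
    {t : ℝ} (ht : 0 ≤ t) :
    Filter.Tendsto (fun n : ℕ => φ^[n] t) Filter.atTop (nhds 0) := by
  obtain ⟨hmono, husc, hnn, h0, hlt⟩ := hφ
  have hle : ∀ s : ℝ, 0 ≤ s → φ s ≤ s := by
    intro s hs
    rcases eq_or_lt_of_le hs with h | h
    · simp [← h, h0]
    · exact (hlt s h).le
  have hcnn : ∀ n, 0 ≤ φ^[n] t := by
    intro n; induction n with
    | zero => exact ht
    | succ n ih => rw [Function.iterate_succ_apply']; exact hnn _ ih
  have hanti : Antitone fun n : ℕ => φ^[n] t := by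
    apply antitone_nat_of_succ_le
    intro n
    rw [Function.iterate_succ_apply']
    exact hle _ (hcnn n)
  have hbdd : BddBelow (Set.range fun n : ℕ => φ^[n] t) :=
    ⟨0, by rintro y ⟨n, rfl⟩; exact hcnn n⟩
  set ℓ : ℝ := ⨅ n : ℕ, φ^[n] t with hℓdef
  have hℓ : Filter.Tendsto (fun n : ℕ => φ^[n] t) Filter.atTop (nhds ℓ) :=
    tendsto_atTop_ciInf hanti hbdd
  have hℓnn : 0 ≤ ℓ := le_of_tendsto_of_tendsto tendsto_const_nhds hℓ
    (Filter.Eventually.of_forall hcnn)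
  rcases eq_or_lt_of_le hℓnn with h | h
  · rwa [← h] at hℓ
  · exfalso
    have hmem : ∀ n : ℕ, φ^[n] t ∈ Set.Ici (0 : ℝ) := hcnn
    have hwithin : Filter.Tendsto (fun n : ℕ => φ^[n] t) Filter.atTop
        (nhdsWithin ℓ (Set.Ici 0)) :=
      tendsto_nhdsWithin_of_tendsto_nhds_of_eventually_within _ hℓ
        (Filter.Eventually.of_forall hmem)
    have husc' := husc ℓ hℓnn ℓ (hlt ℓ h)
    have hev : ∀ᶠ n in Filter.atTop, φ (φ^[n] t) < ℓ := hwithin.eventually husc'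
    obtain ⟨n, hn⟩ := hev.exists
    have : ℓ ≤ φ^[n + 1] t := hanti.le_of_tendsto hℓ (n + 1)
    rw [Function.iterate_succ_apply'] at this
    exact absurd hn (not_lt.mpr this)

theorem weakQuasicontraction_iterates_tendsto_of_tendsto {X : Type*} [MetricSpace X]
    (φ : ℝ → ℝ) (T : X → X) (hφ : IsComparisonFn φ) (hT : IsWeakQuasicontraction φ T)
    (x x₀ : X) (hx : Filter.Tendsto (fun n : ℕ => T^[n] x) Filter.atTop (nhds x₀)) :
    Filter.Tendsto (fun n : ℕ => T^[n] x₀) Filter.atTop (nhds x₀) := by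
  set D : ℝ := Metric.diam (dorbitOf T x₀ x) with hD
  have hDnn : 0 ≤ D := Metric.diam_nonneg
  have hbound : ∀ n : ℕ, Metric.diam (dorbitOf T (T^[n] x₀) (T^[n] x)) ≤ φ^[n] D := by
    intro n; induction n with
    | zero => simp [hD]
    | succ n ih =>
      rw [Function.iterate_succ_apply', Function.iterate_succ_apply',
        Function.iterate_succ_apply']
      exact (diam_dorbit_step hφ hT _ _).trans (hφ.1 Metric.diam_nonneg
        (comparison_iterate_nonneg hφ hDnn n) ih)
  have hdist : ∀ n : ℕ, dist (T^[n] x₀) x₀ ≤ φ^[n] D + dist (T^[n] x) x₀ := by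
    intro n
    calc dist (T^[n] x₀) x₀ ≤ dist (T^[n] x₀) (T^[n] x) + dist (T^[n] x) x₀ :=
          dist_triangle _ _ _
      _ ≤ φ^[n] D + dist (T^[n] x) x₀ := by
          gcongr
          exact (Metric.dist_le_diam_of_mem (dorbit_bounded hT _ _)
            (Or.inl (self_mem_orbitOf T _)) (Or.inr (self_mem_orbitOf T _))).trans
            (hbound n)
  have hlim : Filter.Tendsto (fun n : ℕ => φ^[n] D + dist (T^[n] x) x₀)
      Filter.atTop (nhds 0) := by
    have h1 := comparison_iterate_tendsto_zero hφ hDnn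
    have h2 : Filter.Tendsto (fun n : ℕ => dist (T^[n] x) x₀) Filter.atTop (nhds 0) :=
      tendsto_iff_dist_tendsto_zero.mp hx
    simpa using h1.add h2
  rw [tendsto_iff_dist_tendsto_zero]
  exact squeeze_zero (fun n => dist_nonneg) hdist hlim
end

section
/- Let (X,d) be a metric space, φ a comparison function, and T : X → X a weak φ-quasicontraction. If x₀ ∈ X is such that the sequence of iterates Tⁿx₀ converges to x₀, then diam 𝒪(x₀) = 0; in particular, Tx₀ = x₀. -/
open Metric Set Function Filter Topology

lemma orbit_iter_subset {X : Type*} (T : X → X) (x : X) (a : ℕ) :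
    orbitOf T (T^[a] x) ⊆ orbitOf T x := by
  rintro _ ⟨k, rfl⟩
  exact ⟨k + a, by simp [Function.iterate_add_apply]⟩

theorem weakQuasicontraction_fixedPoint_of_iterates_tendsto {X : Type*} [MetricSpace X]
    (φ : ℝ → ℝ) (T : X → X) (hφ : IsComparisonFn φ) (hT : IsWeakQuasicontraction φ T)
    (x₀ : X) (hx₀ : Filter.Tendsto (fun n : ℕ => T^[n] x₀) Filter.atTop (nhds x₀)) :
    Metric.diam (orbitOf T x₀) = 0 ∧ T x₀ = x₀ := by
  set S := orbitOf T x₀ with hS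
  have hbdd : Bornology.IsBounded S := hT.1 x₀
  set D := Metric.diam S with hD
  have hD0 : 0 ≤ D := Metric.diam_nonneg
  have hφD : 0 ≤ φ D := hφ.2.2.1 D hD0
  -- key: distances between positive iterates are ≤ φ D
  have key : ∀ m n : ℕ, dist (T^[m + 1] x₀) (T^[n + 1] x₀) ≤ φ D := by
    intro m n
    have h1 : dist (T (T^[m] x₀)) (T (T^[n] x₀)) ≤
        φ (Metric.diam (dorbitOf T (T^[m] x₀) (T^[n] x₀))) := hT.2 _ _
    have hsub : dorbitOf T (T^[m] x₀) (T^[n] x₀) ⊆ S :=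
      Set.union_subset (orbit_iter_subset T x₀ m) (orbit_iter_subset T x₀ n)
    have hle : Metric.diam (dorbitOf T (T^[m] x₀) (T^[n] x₀)) ≤ D :=
      Metric.diam_mono hsub hbdd
    calc dist (T^[m + 1] x₀) (T^[n + 1] x₀)
        = dist (T (T^[m] x₀)) (T (T^[n] x₀)) := by
          rw [Function.iterate_succ_apply' T m, Function.iterate_succ_apply' T n]
      _ ≤ φ (Metric.diam (dorbitOf T (T^[m] x₀) (T^[n] x₀))) := h1
      _ ≤ φ D := hφ.1 Metric.diam_nonneg hD0 hle
  -- distances from x₀ to positive iterates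
  have key0 : ∀ n : ℕ, dist x₀ (T^[n + 1] x₀) ≤ φ D := by
    intro n
    have htend : Filter.Tendsto (fun k : ℕ => dist (T^[k + 1] x₀) (T^[n + 1] x₀))
        Filter.atTop (nhds (dist x₀ (T^[n + 1] x₀))) := by
      have : Filter.Tendsto (fun k : ℕ => T^[k + 1] x₀) Filter.atTop (nhds x₀) :=
        hx₀.comp (Filter.tendsto_add_atTop_nat 1)
      exact (Continuous.tendsto (continuous_id.dist continuous_const) x₀).comp this
    exact le_of_tendsto htend (Filter.Eventually.of_forall fun k => key k n)
  have hDle : D ≤ φ D := by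
    apply Metric.diam_le_of_forall_dist_le hφD
    rintro _ ⟨m, rfl⟩ _ ⟨n, rfl⟩
    match m, n with
    | 0, 0 => simpa using hφD
    | 0, n + 1 => simpa using key0 n
    | m + 1, 0 => simpa [dist_comm] using key0 m
    | m + 1, n + 1 => exact key m n
  have hDzero : D = 0 := by
    by_contra h
    have hpos : 0 < D := lt_of_le_of_ne hD0 (Ne.symm h)
    exact absurd hDle (not_le.mpr (hφ.2.2.2.2 D hpos))
  refine ⟨hDzero, ?_⟩
  have h1 : T x₀ ∈ S := ⟨1, by simp⟩
  have h0 : x₀ ∈ S := ⟨0, rfl⟩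
  have := Metric.dist_le_diam_of_mem hbdd h1 h0
  rw [← hD, hDzero] at this
  exact dist_eq_zero.mp (le_antisymm this dist_nonneg)
end

section
/- Corollary (Ćirić-type linear quasicontractions): Let (X,d) be a nonempty complete metric space, let q ∈ (0,1) be fixed, and let T : X → X satisfy d(Tx,Ty) ≤ q · diam{x, y, Tx, Ty} for all x, y ∈ X. Then T has a unique fixed point, and for every x ∈ X the sequence (Tⁿx) converges to this fixed point. -/
open Metric Set Function Filter Topology

private lemma diam4_le {X : Type*} [MetricSpace X] {a b c d : X} {s : Set X}
    (hs : Bornology.IsBounded s) (ha : a ∈ s) (hb : b ∈ s) (hc : c ∈ s) (hd : d ∈ s) :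
    Metric.diam {a, b, c, d} ≤ Metric.diam s :=
  Metric.diam_mono (by
    simp only [Set.insert_subset_iff, Set.singleton_subset_iff]
    exact ⟨ha, hb, hc, hd⟩) hs

theorem ciric_fixedPoint {X : Type*} [MetricSpace X] [CompleteSpace X] [Nonempty X]
    (q : ℝ) (hq0 : 0 < q) (hq1 : q < 1) (T : X → X)
    (hT : ∀ x y : X, dist (T x) (T y) ≤ q * Metric.diam {x, y, T x, T y}) :
    ∃ x₀ : X, T x₀ = x₀ ∧ (∀ y : X, T y = y → y = x₀) ∧
      ∀ x : X, Filter.Tendsto (fun n : ℕ => T^[n] x) Filter.atTop (nhds x₀) := by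
  have hq1' : (0:ℝ) < 1 - q := by linarith
  -- finite orbit segments
  set S : X → ℕ → Set X := fun x n => (fun k : ℕ => T^[k] x) '' Set.Iic n with hS
  have hSbdd : ∀ x n, Bornology.IsBounded (S x n) :=
    fun x n => ((Set.finite_Iic n).image _).isBounded
  have hSmem : ∀ x n k, k ≤ n → T^[k] x ∈ S x n := fun x n k hk => ⟨k, hk, rfl⟩
  -- diameter of finite orbit segments is uniformly bounded
  have hSdiam : ∀ x n, Metric.diam (S x n) ≤ dist x (T x) / (1 - q) := by
    intro x n
    have hstep : Metric.diam (S x n) ≤ dist x (T x) + q * Metric.diam (S x n) := by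
      apply Metric.diam_le_of_forall_dist_le (by positivity)
      rintro a ⟨i, hi, rfl⟩ b ⟨j, hj, rfl⟩
      simp only [Set.mem_Iic] at hi hj
      have key : ∀ i j : ℕ, i + 1 ≤ n → j + 1 ≤ n →
          dist (T^[i+1] x) (T^[j+1] x) ≤ q * Metric.diam (S x n) := by
        intro i j hi hj
        have h1 : dist (T^[i+1] x) (T^[j+1] x)
            ≤ q * Metric.diam {T^[i] x, T^[j] x, T (T^[i] x), T (T^[j] x)} := by
          rw [Function.iterate_succ_apply' T i, Function.iterate_succ_apply' T j]
          exact hT _ _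
        refine h1.trans (mul_le_mul_of_nonneg_left ?_ hq0.le)
        rw [← Function.iterate_succ_apply' T i, ← Function.iterate_succ_apply' T j]
        exact diam4_le (hSbdd x n) (hSmem x n i (by omega)) (hSmem x n j (by omega))
          (hSmem x n (i+1) hi) (hSmem x n (j+1) hj)
      match i, j with
      | 0, 0 => simp only [Function.iterate_zero_apply, dist_self]; positivity
      | 0, j+1 =>
        have h2 : dist (T^[1] x) (T^[j+1] x) ≤ q * Metric.diam (S x n) :=
          key 0 j (by omega) hj
        calc dist (T^[0] x) (T^[j+1] x)
            ≤ dist (T^[0] x) (T^[1] x) + dist (T^[1] x) (T^[j+1] x) := dist_triangle _ _ _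
          _ ≤ dist x (T x) + q * Metric.diam (S x n) := by
              simp only [Function.iterate_zero_apply, Function.iterate_one] at h2 ⊢
              linarith
      | i+1, 0 =>
        have h2 : dist (T^[1] x) (T^[i+1] x) ≤ q * Metric.diam (S x n) :=
          key 0 i (by omega) hi
        rw [dist_comm]
        calc dist (T^[0] x) (T^[i+1] x)
            ≤ dist (T^[0] x) (T^[1] x) + dist (T^[1] x) (T^[i+1] x) := dist_triangle _ _ _
          _ ≤ dist x (T x) + q * Metric.diam (S x n) := by
              simp only [Function.iterate_zero_apply, Function.iterate_one] at h2 ⊢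
              linarith
      | i+1, j+1 =>
        have := key i j hi hj
        have : dist (T^[i+1] x) (T^[j+1] x) ≤ q * Metric.diam (S x n) := this
        have hd : (0:ℝ) ≤ dist x (T x) := dist_nonneg
        linarith
    rw [le_div_iff₀ hq1']
    linarith
  -- whole orbit : pairwise bound
  have horbpair : ∀ x : X, ∀ a ∈ orbitOf T x, ∀ b ∈ orbitOf T x,
      dist a b ≤ dist x (T x) / (1 - q) := by
    rintro x a ⟨i, rfl⟩ b ⟨j, rfl⟩
    have hib : T^[i] x ∈ S x (max i j) := hSmem x _ i (le_max_left _ _)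
    have hjb : T^[j] x ∈ S x (max i j) := hSmem x _ j (le_max_right _ _)
    exact (Metric.dist_le_diam_of_mem (hSbdd x _) hib hjb).trans (hSdiam x _)
  have horbbdd : ∀ x : X, Bornology.IsBounded (orbitOf T x) := by
    intro x
    rw [Metric.isBounded_iff]
    exact ⟨_, fun a ha b hb => horbpair x a ha b hb⟩
  have horbdiam : ∀ x : X, Metric.diam (orbitOf T x) ≤ dist x (T x) / (1 - q) := by
    intro x
    exact Metric.diam_le_of_forall_dist_le (by positivity) (horbpair x)
  have horbmem : ∀ (y : X) (k : ℕ), T^[k] y ∈ orbitOf T y := fun y k => ⟨k, rfl⟩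
  -- one-step contraction of orbit diameters
  have hcontr : ∀ y : X, Metric.diam (orbitOf T (T y)) ≤ q * Metric.diam (orbitOf T y) := by
    intro y
    apply Metric.diam_le_of_forall_dist_le (by positivity)
    rintro a ⟨i, rfl⟩ b ⟨j, rfl⟩
    have h1 : dist (T^[i] (T y)) (T^[j] (T y))
        ≤ q * Metric.diam {T^[i] y, T^[j] y, T (T^[i] y), T (T^[j] y)} := by
      rw [← Function.iterate_succ_apply, ← Function.iterate_succ_apply,
        Function.iterate_succ_apply' T i, Function.iterate_succ_apply' T j]
      exact hT _ _
    refine h1.trans (mul_le_mul_of_nonneg_left ?_ hq0.le)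
    rw [← Function.iterate_succ_apply' T i, ← Function.iterate_succ_apply' T j]
    exact diam4_le (horbbdd y) (horbmem y i) (horbmem y j) (horbmem y (i+1)) (horbmem y (j+1))
  -- geometric decay of tail diameters
  have htail : ∀ (x : X) (n : ℕ),
      Metric.diam (orbitOf T (T^[n] x)) ≤ q ^ n * Metric.diam (orbitOf T x) := by
    intro x n
    induction n with
    | zero => simp
    | succ n ih =>
      rw [Function.iterate_succ_apply' T n]
      calc Metric.diam (orbitOf T (T (T^[n] x)))
          ≤ q * Metric.diam (orbitOf T (T^[n] x)) := hcontr _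
        _ ≤ q * (q ^ n * Metric.diam (orbitOf T x)) :=
            mul_le_mul_of_nonneg_left ih hq0.le
        _ = q ^ (n+1) * Metric.diam (orbitOf T x) := by ring
  -- every orbit converges to a fixed point
  have hconv : ∀ x : X, ∃ p : X, T p = p ∧
      Filter.Tendsto (fun n : ℕ => T^[n] x) Filter.atTop (nhds p) := by
    intro x
    have hcauchy : CauchySeq (fun n : ℕ => T^[n] x) := by
      apply cauchySeq_of_le_geometric q (Metric.diam (orbitOf T x)) hq1
      intro n
      have h1 : T^[n] x ∈ orbitOf T (T^[n] x) := ⟨0, rfl⟩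
      have h2 : T^[n+1] x ∈ orbitOf T (T^[n] x) := by
        rw [Function.iterate_succ_apply' T n]; exact ⟨1, rfl⟩
      have h3 : Bornology.IsBounded (orbitOf T (T^[n] x)) := horbbdd _
      calc dist (T^[n] x) (T^[n+1] x) ≤ Metric.diam (orbitOf T (T^[n] x)) :=
            Metric.dist_le_diam_of_mem h3 h1 h2
        _ ≤ q ^ n * Metric.diam (orbitOf T x) := htail x n
        _ = Metric.diam (orbitOf T x) * q ^ n := mul_comm _ _
    obtain ⟨p, hp⟩ := cauchySeq_tendsto_of_complete hcauchy
    refine ⟨p, ?_, hp⟩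
    -- show p is a fixed point
    have h0 : Filter.Tendsto (fun n : ℕ => dist (T^[n] x) p) Filter.atTop (nhds 0) :=
      tendsto_iff_dist_tendsto_zero.mp hp
    have h0' : Filter.Tendsto (fun n : ℕ => dist (T^[n+1] x) p) Filter.atTop (nhds 0) :=
      h0.comp (tendsto_add_atTop_nat 1)
    set d : ℝ := dist p (T p) with hdd
    have hd : ∀ n : ℕ, (1 - q) * d ≤ (1 + q) * (dist (T^[n] x) p + dist (T^[n+1] x) p) := by
      intro n
      set a : X := T^[n] x
      set a' : X := T^[n+1] x
      set ε : ℝ := dist a p + dist a' p with hε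
      have h1 : dist a' (T p) ≤ q * Metric.diam {a, p, a', T p} := by
        have : a' = T a := Function.iterate_succ_apply' T n x
        rw [this]
        exact hT a p
      have h2 : Metric.diam {a, p, a', T p} ≤ d + ε := by
        apply Metric.diam_le_of_forall_dist_le (by positivity)
        have t1 : dist a a' ≤ dist a p + dist a' p := by
          rw [dist_comm a' p] at *; exact dist_triangle a p a'
        have t2 : dist a (T p) ≤ dist a p + d := dist_triangle a p (T p)
        have t3 : dist a' (T p) ≤ dist a' p + d := dist_triangle a' p (T p)
        have n1 : (0:ℝ) ≤ dist a p := dist_nonneg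
        have n2 : (0:ℝ) ≤ dist a' p := dist_nonneg
        have n3 : (0:ℝ) ≤ d := dist_nonneg
        have b1 : dist a p ≤ d + ε := by linarith [hε.symm, n2, n3]
        have b2 : dist p a ≤ d + ε := by rw [dist_comm]; exact b1
        have b3 : dist a a' ≤ d + ε := by linarith [t1, hε.symm, n3]
        have b4 : dist a' a ≤ d + ε := by rw [dist_comm]; exact b3
        have b5 : dist a (T p) ≤ d + ε := by linarith [t2, hε.symm, n2]
        have b6 : dist (T p) a ≤ d + ε := by rw [dist_comm]; exact b5
        have b7 : dist p a' ≤ d + ε := by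
          have hc : dist p a' = dist a' p := dist_comm p a'
          linarith [hε.symm, n1, n3]
        have b8 : dist a' p ≤ d + ε := by rw [dist_comm]; exact b7
        have b9 : dist p (T p) ≤ d + ε := by linarith [hdd.symm, hε.symm, n1, n2]
        have b10 : dist (T p) p ≤ d + ε := by rw [dist_comm]; exact b9
        have b11 : dist a' (T p) ≤ d + ε := by linarith [t3, hε.symm, n1]
        have b12 : dist (T p) a' ≤ d + ε := by rw [dist_comm]; exact b11
        rintro u (rfl | rfl | rfl | rfl) v (rfl | rfl | rfl | rfl) <;>
          first
            | (simp only [dist_self]; positivity)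
            | assumption
      have h3 : d ≤ dist p a' + dist a' (T p) := dist_triangle p a' (T p)
      have h4 : dist a' (T p) ≤ q * (d + ε) :=
        h1.trans (mul_le_mul_of_nonneg_left h2 hq0.le)
      have h5 : dist p a' ≤ ε := by
        rw [dist_comm]
        have : (0:ℝ) ≤ dist a p := dist_nonneg
        simp only [hε]; linarith
      nlinarith [dist_nonneg (x := a) (y := p), dist_nonneg (x := a') (y := p)]
    have hεlim : Filter.Tendsto
        (fun n : ℕ => (1 + q) * (dist (T^[n] x) p + dist (T^[n+1] x) p))
        Filter.atTop (nhds 0) := by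
      have := (h0.add h0').const_mul (1 + q)
      simpa using this
    have hle : (1 - q) * d ≤ 0 := ge_of_tendsto hεlim (Filter.Eventually.of_forall hd)
    have : d ≤ 0 := by nlinarith
    have : d = 0 := le_antisymm this dist_nonneg
    have : p = T p := by rwa [hdd, dist_eq_zero] at this
    exact this.symm
  -- assemble
  obtain ⟨x₀, hx₀, hx₀lim⟩ := hconv (Classical.arbitrary X)
  have huniq : ∀ y : X, T y = y → y = x₀ := by
    intro y hy
    have h1 : dist y x₀ = dist (T y) (T x₀) := by rw [hy, hx₀]
    have h2 : ({y, x₀, T y, T x₀} : Set X) = {y, x₀} := by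
      rw [hy, hx₀]
      ext z; simp [or_comm, or_assoc, or_left_comm]
    have h3 : dist y x₀ ≤ q * dist y x₀ := by
      calc dist y x₀ = dist (T y) (T x₀) := h1
        _ ≤ q * Metric.diam {y, x₀, T y, T x₀} := hT y x₀
        _ = q * dist y x₀ := by rw [h2, Metric.diam_pair]
    have : dist y x₀ ≤ 0 := by nlinarith [dist_nonneg (x := y) (y := x₀)]
    have : dist y x₀ = 0 := le_antisymm this dist_nonneg
    rwa [dist_eq_zero] at this
  refine ⟨x₀, hx₀, huniq, fun x => ?_⟩
  obtain ⟨p, hpfix, hplim⟩ := hconv x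
  rwa [huniq p hpfix] at hplim
end

section
/- Let (X,d) be a metric space, q ∈ (0,1), and T : X → X satisfy d(Tx,Ty) ≤ q · diam{x, y, Tx, Ty} for all x, y ∈ X. Then for every x ∈ X and every n ∈ ℕ, the n-orbit 𝒪ₙ(x) = {T^k x : k = 0, 1, …, n} satisfies diam 𝒪ₙ(x) ≤ d(x,Tx)/(1−q); consequently the full orbit 𝒪(x) = {Tⁿx : n ≥ 0} is bounded. -/
open Metric Set Function Filter Topology

theorem ciric_orbit_bounded {X : Type*} [MetricSpace X]
    (q : ℝ) (hq0 : 0 < q) (hq1 : q < 1) (T : X → X)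
    (hT : ∀ x y : X, dist (T x) (T y) ≤ q * Metric.diam {x, y, T x, T y}) :
    (∀ x : X, ∀ n : ℕ,
      Metric.diam ((fun k : ℕ => T^[k] x) '' Set.Iic n) ≤ dist x (T x) / (1 - q)) ∧
    ∀ x : X, Bornology.IsBounded (orbitOf T x) := by
  have h1q : (0:ℝ) < 1 - q := by linarith
  have key : ∀ x : X, ∀ n : ℕ,
      Metric.diam ((fun k : ℕ => T^[k] x) '' Set.Iic n) ≤ dist x (T x) / (1 - q) := by
    intro x n
    set S := (fun k : ℕ => T^[k] x) '' Set.Iic n with hS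
    have hfin : S.Finite := (Set.finite_Iic n).image _
    have hbdd : Bornology.IsBounded S := hfin.isBounded
    set D := Metric.diam S with hD
    have hDnn : 0 ≤ D := Metric.diam_nonneg
    have hsub : ∀ k, k ≤ n → T^[k] x ∈ S := fun k hk => ⟨k, hk, rfl⟩
    -- distances between two points with positive index are ≤ q * D
    have step2 : ∀ k l : ℕ, 1 ≤ k → k ≤ n → 1 ≤ l → l ≤ n →
        dist (T^[k] x) (T^[l] x) ≤ q * D := by
      intro k l hk1 hkn hl1 hln
      obtain ⟨k', rfl⟩ : ∃ k', k = k' + 1 := ⟨k - 1, by omega⟩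
      obtain ⟨l', rfl⟩ : ∃ l', l = l' + 1 := ⟨l - 1, by omega⟩
      have ek : T^[k' + 1] x = T (T^[k'] x) := Function.iterate_succ_apply' T k' x
      have el : T^[l' + 1] x = T (T^[l'] x) := Function.iterate_succ_apply' T l' x
      rw [ek, el]
      calc dist (T (T^[k'] x)) (T (T^[l'] x))
          ≤ q * Metric.diam {T^[k'] x, T^[l'] x, T (T^[k'] x), T (T^[l'] x)} := hT _ _
        _ ≤ q * D := by
            apply mul_le_mul_of_nonneg_left _ hq0.le
            apply Metric.diam_mono _ hbdd
            intro y hy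
            simp only [Set.mem_insert_iff, Set.mem_singleton_iff] at hy
            rcases hy with h | h | h | h <;> subst h
            · exact hsub k' (by omega)
            · exact hsub l' (by omega)
            · rw [← ek]; exact hsub (k' + 1) hkn
            · rw [← el]; exact hsub (l' + 1) hln
    have main : D ≤ dist x (T x) + q * D := by
      apply Metric.diam_le_of_forall_dist_le (by positivity)
      rintro a ⟨k, hk, rfl⟩ b ⟨l, hl, rfl⟩
      simp only [Set.mem_Iic] at hk hl
      rcases Nat.eq_zero_or_pos k with hk0 | hk0 <;>
        rcases Nat.eq_zero_or_pos l with hl0 | hl0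
      · subst hk0; subst hl0; simp; positivity
      · subst hk0
        simp only [Function.iterate_zero_apply]
        have h1 : dist (T x) (T^[l] x) ≤ q * D := by
          simpa using step2 1 l le_rfl (by omega) hl0 hl
        linarith [dist_triangle x (T x) (T^[l] x)]
      · subst hl0
        simp only [Function.iterate_zero_apply]
        rw [dist_comm]
        have h1 : dist (T x) (T^[k] x) ≤ q * D := by
          simpa using step2 1 k le_rfl (by omega) hk0 hk
        linarith [dist_triangle x (T x) (T^[k] x)]
      · calc dist (T^[k] x) (T^[l] x) ≤ q * D := step2 k l hk0 hk hl0 hl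
          _ ≤ dist x (T x) + q * D := le_add_of_nonneg_left dist_nonneg
    rw [le_div_iff₀ h1q]
    nlinarith
  refine ⟨key, fun x => ?_⟩
  rw [orbitOf]
  apply (Metric.isBounded_closedBall (x := x) (r := dist x (T x) / (1 - q))).subset
  rintro _ ⟨n, rfl⟩
  rw [Metric.mem_closedBall]
  have hmem : T^[n] x ∈ (fun k : ℕ => T^[k] x) '' Set.Iic n := ⟨n, le_refl n, rfl⟩
  have hmem0 : x ∈ (fun k : ℕ => T^[k] x) '' Set.Iic n := ⟨0, Nat.zero_le n, rfl⟩
  have hbdd : Bornology.IsBounded ((fun k : ℕ => T^[k] x) '' Set.Iic n) :=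
    ((Set.finite_Iic n).image _).isBounded
  exact (Metric.dist_le_diam_of_mem hbdd hmem hmem0).trans (key x n)
end

section
/- Corollary (nonlinear contractions of Boyd–Wong/Browder/Matkowski type): Let (X,d) be a nonempty complete metric space, φ a comparison function, and T : X → X satisfy d(Tx,Ty) ≤ φ(d(x,y)) for all x, y ∈ X. Then T has a unique fixed point, and for every x ∈ X the sequence (Tⁿx) converges to this fixed point. -/
open Metric Set Function Filter Topology

theorem nonlinear_contraction_fixedPoint {X : Type*} [MetricSpace X] [CompleteSpace X]
    [Nonempty X] (φ : ℝ → ℝ) (T : X → X) (hφ : IsComparisonFn φ)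
    (hT : ∀ x y : X, dist (T x) (T y) ≤ φ (dist x y)) :
    ∃ x₀ : X, T x₀ = x₀ ∧ (∀ y : X, T y = y → y = x₀) ∧
      ∀ x : X, Filter.Tendsto (fun n : ℕ => T^[n] x) Filter.atTop (nhds x₀) := by
  obtain ⟨hmono, husc, hnonneg, hφ0, hlt⟩ := hφ
  have hle : ∀ t, 0 ≤ t → φ t ≤ t := by
    intro t ht
    rcases ht.eq_or_lt with h | h
    · rw [← h, hφ0]
    · exact (hlt t h).le
  -- T is 1-Lipschitz, hence continuous
  have hTc : Continuous T := by
    have : LipschitzWith 1 T := by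
      refine LipschitzWith.of_dist_le_mul fun x y => ?_
      simpa using (hT x y).trans (hle _ dist_nonneg)
  -- each orbit is Cauchy
    exact this.continuous
  have hcauchy : ∀ x : X, CauchySeq fun n : ℕ => T^[n] x := by
    intro x
    set a : ℕ → ℝ := fun n => dist (T^[n] x) (T^[n + 1] x) with ha
    have ha_nonneg : ∀ n, 0 ≤ a n := fun n => dist_nonneg
    have ha_rec : ∀ n, a (n + 1) ≤ φ (a n) := by
      intro n
      have : a (n + 1) = dist (T (T^[n] x)) (T (T^[n + 1] x)) := by
        simp [ha, Function.iterate_succ_apply']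
      rw [this]
      exact hT _ _
    have ha_anti : Antitone a :=
      antitone_nat_of_succ_le fun n => (ha_rec n).trans (hle _ (ha_nonneg n))
    have hbdd : BddBelow (Set.range a) := ⟨0, by rintro _ ⟨n, rfl⟩; exact ha_nonneg n⟩
    set L : ℝ := ⨅ n, a n with hL
    have hLtend : Tendsto a atTop (𝓝 L) := tendsto_atTop_ciInf ha_anti hbdd
    have hLle : ∀ n, L ≤ a n := fun n => ciInf_le hbdd n
    have hL0 : 0 ≤ L := le_ciInf ha_nonneg
    have hLzero : L = 0 := by
      by_contra hne
      have hLpos : 0 < L := lt_of_le_of_ne hL0 (Ne.symm hne)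
      have hy : φ L < (φ L + L) / 2 ∧ (φ L + L) / 2 < L := by
        constructor <;> linarith [hlt L hLpos]
      have htend' : Tendsto a atTop (𝓝[Set.Ici (0:ℝ)] L) :=
        tendsto_nhdsWithin_of_tendsto_nhds_of_eventually_within _ hLtend
          (Eventually.of_forall fun n => ha_nonneg n)
      have := (husc L hL0) ((φ L + L) / 2) hy.1
      have hev : ∀ᶠ n in atTop, φ (a n) < (φ L + L) / 2 := htend' this
      obtain ⟨n, hn⟩ := hev.exists
      have : a (n + 1) < (φ L + L) / 2 := lt_of_le_of_lt (ha_rec n) hn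
      linarith [hLle (n + 1)]
    have ha0 : Tendsto a atTop (𝓝 0) := hLzero ▸ hLtend
    rw [Metric.cauchySeq_iff']
    intro ε hε
    have hε2 : 0 < ε / 2 := by linarith
    have hδ : 0 < ε / 2 - φ (ε / 2) := by linarith [hlt (ε / 2) hε2]
    obtain ⟨N, hN⟩ := (Metric.tendsto_atTop.1 ha0 _ hδ).imp fun N h => h N le_rfl
    have hNlt : a N < ε / 2 - φ (ε / 2) := by
      have := hN; rw [Real.dist_eq, sub_zero, abs_of_nonneg (ha_nonneg N)] at this
      exact this
    refine ⟨N, fun m hm => ?_⟩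
    have key : ∀ m, N ≤ m → dist (T^[m] x) (T^[N] x) ≤ ε / 2 := by
      intro m hm
      induction m with
      | zero => simp [Nat.le_zero.mp hm]; positivity
      | succ k ih =>
        rcases Nat.lt_or_ge N (k + 1) with h | h
        · have hk : N ≤ k := Nat.lt_succ_iff.mp h
          have h1 : dist (T^[k + 1] x) (T^[N + 1] x) ≤ φ (dist (T^[k] x) (T^[N] x)) := by
            rw [Function.iterate_succ_apply', Function.iterate_succ_apply']
            exact hT _ _
          have h2 : φ (dist (T^[k] x) (T^[N] x)) ≤ φ (ε / 2) :=
            hmono dist_nonneg hε2.le (ih hk)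
          calc dist (T^[k + 1] x) (T^[N] x)
              ≤ dist (T^[k + 1] x) (T^[N + 1] x) + dist (T^[N + 1] x) (T^[N] x) :=
                dist_triangle _ _ _
            _ ≤ φ (ε / 2) + a N := by
                have : dist (T^[N + 1] x) (T^[N] x) = a N := dist_comm _ _
                rw [this]; exact add_le_add (h1.trans h2) le_rfl
            _ ≤ ε / 2 := by linarith
        · have : N = k + 1 := le_antisymm hm h
          simp [this]; positivity
    exact lt_of_le_of_lt (key m hm) (by linarith)
  -- get the fixed point from some base point
  obtain ⟨z⟩ := ‹Nonempty X›
  obtain ⟨x₀, hx₀⟩ := cauchySeq_tendsto_of_complete (hcauchy z)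
  have hfix : T x₀ = x₀ := by
    have h1 : Tendsto (fun n : ℕ => T (T^[n] z)) atTop (𝓝 (T x₀)) :=
      (hTc.tendsto x₀).comp hx₀
    have h2 : Tendsto (fun n : ℕ => T (T^[n] z)) atTop (𝓝 x₀) := by
      have : (fun n : ℕ => T (T^[n] z)) = fun n : ℕ => T^[n + 1] z := by
        funext n; rw [Function.iterate_succ_apply']
      rw [this]
      exact hx₀.comp (tendsto_add_atTop_nat 1)
    exact tendsto_nhds_unique h1 h2
  have huniq : ∀ y : X, T y = y → y = x₀ := by
    intro y hy
    by_contra hne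
    have hd : 0 < dist y x₀ := dist_pos.mpr hne
    have : dist y x₀ ≤ φ (dist y x₀) := by
      calc dist y x₀ = dist (T y) (T x₀) := by rw [hy, hfix]
        _ ≤ φ (dist y x₀) := hT _ _
    linarith [hlt _ hd]
  refine ⟨x₀, hfix, huniq, fun x => ?_⟩
  obtain ⟨p, hp⟩ := cauchySeq_tendsto_of_complete (hcauchy x)
  have hpfix : T p = p := by
    have h1 : Tendsto (fun n : ℕ => T (T^[n] x)) atTop (𝓝 (T p)) := (hTc.tendsto p).comp hp
    have h2 : Tendsto (fun n : ℕ => T (T^[n] x)) atTop (𝓝 p) := by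
      have : (fun n : ℕ => T (T^[n] x)) = fun n : ℕ => T^[n + 1] x := by
        funext n; rw [Function.iterate_succ_apply']
      rw [this]
      exact hp.comp (tendsto_add_atTop_nat 1)
    exact tendsto_nhds_unique h1 h2
  rwa [huniq p hpfix] at hp
end

section
/- Let (X,d) be a metric space, φ a comparison function, and T : X → X satisfy d(Tx,Ty) ≤ φ(d(x,y)) for all x, y ∈ X. Then every orbit 𝒪(x) = {Tⁿx : n ≥ 0} is bounded; in particular, T is a weak φ-quasicontraction. -/
/-! Along an orbit the displacements `cₙ = d(Tⁿx, Tⁿ⁺¹x)` satisfy `cₙ₊₁ ≤ φ(cₙ)`, so they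
decrease to a limit `γ` with `γ ≤ φ(γ)` by upper semicontinuity, forcing `γ = 0`.
Once `c_N ≤ 1 - φ(1)`, the closed unit ball about `T^N x` contains `T^{n+1} x` whenever it
contains `Tⁿx`, because `d(T^N x, T^{n+1} x) ≤ c_N + φ(d(T^N x, Tⁿx)) ≤ 1 - φ(1) + φ(1)`;
so the orbit is bounded. The quasicontraction inequality then follows from
`d(x, y) ≤ diam 𝒪(x, y)` and monotonicity of `φ`. -/

open Metric Set Function Filter Topology

namespace IsComparisonFn

variable {φ : ℝ → ℝ}

theorem monotoneOn (hφ : IsComparisonFn φ) : MonotoneOn φ (Ici 0) := hφ.1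

theorem upperSemicontinuousOn (hφ : IsComparisonFn φ) : UpperSemicontinuousOn φ (Ici 0) :=
  hφ.2.1

theorem map_zero (hφ : IsComparisonFn φ) : φ 0 = 0 := hφ.2.2.2.1

theorem lt_self (hφ : IsComparisonFn φ) {t : ℝ} (ht : 0 < t) : φ t < t := hφ.2.2.2.2 t ht

theorem le_self (hφ : IsComparisonFn φ) {t : ℝ} (ht : 0 ≤ t) : φ t ≤ t := by
  rcases ht.eq_or_lt with rfl | ht
  · exact hφ.map_zero.le
  · exact (hφ.lt_self ht).le

theorem tendsto_zero_of_le_apply (hφ : IsComparisonFn φ) {c : ℕ → ℝ} (hc0 : ∀ n, 0 ≤ c n)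
    (hc : ∀ n, c (n + 1) ≤ φ (c n)) : Tendsto c atTop (𝓝 0) := by
  have hbdd : BddBelow (range c) := ⟨0, by rintro _ ⟨n, rfl⟩; exact hc0 n⟩
  have hanti : Antitone c :=
    antitone_nat_of_succ_le fun n => (hc n).trans (hφ.le_self (hc0 n))
  set γ := ⨅ n, c n
  have hlim : Tendsto c atTop (𝓝 γ) := tendsto_atTop_ciInf hanti hbdd
  have hγ0 : 0 ≤ γ := le_ciInf hc0
  suffices hγ : γ = 0 by rwa [hγ] at hlim
  by_contra hne
  have hγpos : 0 < γ := hγ0.lt_of_ne' hne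
  have hφγ : ∀ᶠ t in 𝓝[Ici 0] γ, φ t < γ :=
    hφ.upperSemicontinuousOn γ hγ0 γ (hφ.lt_self hγpos)
  have hlim' : Tendsto c atTop (𝓝[Ici 0] γ) :=
    tendsto_nhdsWithin_of_tendsto_nhds_of_eventually_within _ hlim (.of_forall hc0)
  obtain ⟨n, hn⟩ := (hlim'.eventually hφγ).exists
  exact (ciInf_le hbdd (n + 1)).trans (hc n) |>.not_gt hn

end IsComparisonFn

section NonlinearContraction

variable {X : Type*} [MetricSpace X] {φ : ℝ → ℝ} {T : X → X}

theorem tendsto_dist_iterate_succ_of_le_comparison (hφ : IsComparisonFn φ)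
    (hT : ∀ x y, dist (T x) (T y) ≤ φ (dist x y)) (x : X) :
    Tendsto (fun n => dist (T^[n] x) (T^[n + 1] x)) atTop (𝓝 0) :=
  hφ.tendsto_zero_of_le_apply (fun _ => dist_nonneg) fun n => by
    simpa only [iterate_succ_apply'] using hT (T^[n] x) (T^[n + 1] x)

theorem dist_iterate_le_one_of_le_comparison (hφ : IsComparisonFn φ)
    (hT : ∀ x y, dist (T x) (T y) ≤ φ (dist x y)) {x : X} {N : ℕ}
    (hN : dist (T^[N] x) (T^[N + 1] x) ≤ 1 - φ 1) {n : ℕ} (hn : N ≤ n) :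
    dist (T^[N] x) (T^[n] x) ≤ 1 := by
  induction n, hn using Nat.le_induction with
  | base => simp
  | succ n _ ih =>
    have hφ_ih : φ (dist (T^[N] x) (T^[n] x)) ≤ φ 1 :=
      hφ.monotoneOn (mem_Ici.mpr dist_nonneg) (mem_Ici.mpr zero_le_one) ih
    calc dist (T^[N] x) (T^[n + 1] x)
        ≤ dist (T^[N] x) (T^[N + 1] x) + dist (T^[N + 1] x) (T^[n + 1] x) := dist_triangle _ _ _
      _ ≤ (1 - φ 1) + φ (dist (T^[N] x) (T^[n] x)) := by
        gcongr
        simpa only [iterate_succ_apply'] using hT (T^[N] x) (T^[n] x)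
      _ ≤ 1 := by linarith

theorem isBounded_orbitOf_of_le_comparison (hφ : IsComparisonFn φ)
    (hT : ∀ x y, dist (T x) (T y) ≤ φ (dist x y)) (x : X) :
    Bornology.IsBounded (orbitOf T x) := by
  have hgap : 0 < 1 - φ 1 := sub_pos.mpr (hφ.lt_self one_pos)
  obtain ⟨N, hN⟩ := ((tendsto_dist_iterate_succ_of_le_comparison hφ hT x).eventually
    (eventually_le_nhds hgap)).exists
  refine (((finite_Iic N).image fun n => T^[n] x).isBounded.union
    (isBounded_closedBall (x := T^[N] x) (r := 1))).subset ?_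
  rintro _ ⟨n, rfl⟩
  rcases le_or_gt n N with hn | hn
  · exact Or.inl ⟨n, hn, rfl⟩
  · exact Or.inr (mem_closedBall'.mpr (dist_iterate_le_one_of_le_comparison hφ hT hN hn.le))

theorem isWeakQuasicontraction_of_le_comparison (hφ : IsComparisonFn φ)
    (hT : ∀ x y, dist (T x) (T y) ≤ φ (dist x y)) : IsWeakQuasicontraction φ T := by
  refine ⟨isBounded_orbitOf_of_le_comparison hφ hT, fun x y => ?_⟩
  have hbdd : Bornology.IsBounded (dorbitOf T x y) :=
    (isBounded_orbitOf_of_le_comparison hφ hT x).union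
      (isBounded_orbitOf_of_le_comparison hφ hT y)
  have hdiam : dist x y ≤ diam (dorbitOf T x y) :=
    dist_le_diam_of_mem hbdd (Or.inl ⟨0, rfl⟩) (Or.inr ⟨0, rfl⟩)
  exact (hT x y).trans
    (hφ.monotoneOn (mem_Ici.mpr dist_nonneg) (mem_Ici.mpr (dist_nonneg.trans hdiam)) hdiam)

end NonlinearContraction

theorem nonlinear_contraction_orbit_bounded {X : Type*} [MetricSpace X]
    (φ : ℝ → ℝ) (T : X → X) (hφ : IsComparisonFn φ)
    (hT : ∀ x y : X, dist (T x) (T y) ≤ φ (dist x y)) :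
    (∀ x : X, Bornology.IsBounded (orbitOf T x)) ∧ IsWeakQuasicontraction φ T :=
  ⟨isBounded_orbitOf_of_le_comparison hφ hT, isWeakQuasicontraction_of_le_comparison hφ hT⟩
end

section
/- Corollary: Let (X,d) be a nonempty complete metric space and φ a comparison function for which there exists a sequence (cₙ) of nonnegative reals with ∑ cₙ convergent and φⁿ(t) ≤ cₙ·t for all t ≥ 0 and n ∈ ℕ. Then any strong φ-quasicontraction T : X → X has a unique fixed point, and for every x ∈ X the sequence of iterates (Tⁿx) converges to this fixed point. -/
open Metric Set Function Filter Topology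

/-!
Since `d(Tu, Tv) ≤ φ(diam {u, v, Tu, Tv})` and `φ` is increasing, induction on `m` shows that the
iterates `Tˡx` with `m ≤ l ≤ n` have diameter at most `φᵐ(δ)`, where `δ` bounds the diameter of
the first `n + 1` iterates. Taking `k` with `cₖ < 1` and splitting the first `n + 1` iterates at
`k` bounds their diameter uniformly in `n`, so the orbit is bounded; then `cₙ → 0` makes it Cauchy.
Upper semicontinuity of `φ` at `d(p, Tp)` together with `φ(t) < t` forces the limit `p` to be
fixed, and `φ(t) < t` alone gives uniqueness.
-/

theorem IsComparisonFn.iterate_nonneg {φ : ℝ → ℝ} (hφ : IsComparisonFn φ) (n : ℕ) {t : ℝ}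
    (ht : 0 ≤ t) : 0 ≤ φ^[n] t := by
  induction n with
  | zero => exact ht
  | succ n ih => rw [iterate_succ_apply']; exact hφ.2.2.1 _ ih

theorem IsComparisonFn.eq_zero_of_tendsto {φ : ℝ → ℝ} (hφ : IsComparisonFn φ) {ι : Type*}
    {l : Filter ι} [l.NeBot] {u v : ι → ℝ} {r : ℝ} (hu : Tendsto u l (𝓝 r)) (hu0 : ∀ i, 0 ≤ u i)
    (hv : Tendsto v l (𝓝 r)) (hvu : ∀ i, v i ≤ φ (u i)) : r = 0 := by
  obtain ⟨-, husc, -, -, hlt⟩ := hφ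
  have hr0 : 0 ≤ r := ge_of_tendsto' hu hu0
  by_contra hr
  obtain ⟨y, hφy, hyr⟩ := exists_between (hlt r (lt_of_le_of_ne hr0 (Ne.symm hr)))
  have hφu : ∀ᶠ i in l, φ (u i) < y :=
    (tendsto_nhdsWithin_iff.2 ⟨hu, .of_forall hu0⟩).eventually (husc r hr0 y hφy)
  obtain ⟨i, hφi, hvi⟩ := (hφu.and (hv.eventually (lt_mem_nhds hyr))).exists
  linarith [hvu i]

theorem Metric.diam_insert_insert_insert_singleton_le {X : Type*} [PseudoMetricSpace X]
    (p u q v : X) : diam ({p, u, q, v} : Set X) ≤ dist p q + dist p u + dist u v := by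
  have hsplit : ({p, u, q, v} : Set X) = {p, q} ∪ {u, v} := by
    rw [insert_comm u q, insert_union, singleton_union]
  rw [hsplit]
  simpa only [diam_pair] using diam_union (mem_insert p {q}) (mem_insert u {v})

namespace IsStrongQuasicontraction

variable {X : Type*} [MetricSpace X] {φ : ℝ → ℝ} {T : X → X}

theorem diam_image_iterate_Icc_le (hT : IsStrongQuasicontraction φ T) (hφ : IsComparisonFn φ)
    {x : X} {s : Set X} {n : ℕ} (hs : Bornology.IsBounded s)
    (hsub : (fun l => T^[l] x) '' Icc 0 n ⊆ s) (m : ℕ) :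
    diam ((fun l => T^[l] x) '' Icc m n) ≤ φ^[m] (diam s) := by
  induction m with
  | zero => exact diam_mono hsub hs
  | succ m ih =>
    refine diam_le_of_forall_dist_le (hφ.iterate_nonneg _ diam_nonneg) ?_
    rintro _ ⟨i, ⟨hmi, hin⟩, rfl⟩ _ ⟨j, ⟨hmj, hjn⟩, rfl⟩
    obtain ⟨i, rfl⟩ : ∃ i', i = i' + 1 := ⟨i - 1, by omega⟩
    obtain ⟨j, rfl⟩ : ∃ j', j = j' + 1 := ⟨j - 1, by omega⟩
    have hstep : ({T^[i] x, T^[j] x, T (T^[i] x), T (T^[j] x)} : Set X) ⊆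
        (fun l => T^[l] x) '' Icc m n := by
      simp only [insert_subset_iff, singleton_subset_iff, ← iterate_succ_apply' T]
      exact ⟨⟨i, ⟨by omega, by omega⟩, rfl⟩, ⟨j, ⟨by omega, by omega⟩, rfl⟩,
        ⟨i + 1, ⟨by omega, hin⟩, rfl⟩, ⟨j + 1, ⟨by omega, hjn⟩, rfl⟩⟩
    calc dist (T^[i + 1] x) (T^[j + 1] x) = dist (T (T^[i] x)) (T (T^[j] x)) := by
          simp only [iterate_succ_apply']
      _ ≤ φ (diam {T^[i] x, T^[j] x, T (T^[i] x), T (T^[j] x)}) := hT _ _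
      _ ≤ φ (φ^[m] (diam s)) :=
          hφ.1 diam_nonneg (hφ.iterate_nonneg m diam_nonneg)
            ((diam_mono hstep ((finite_Icc m n).image _).isBounded).trans ih)
      _ = φ^[m + 1] (diam s) := (iterate_succ_apply' φ m _).symm

theorem isBounded_orbitOf (hT : IsStrongQuasicontraction φ T) (hφ : IsComparisonFn φ) {k : ℕ}
    {a : ℝ} (ha : a < 1) (hk : ∀ t, 0 ≤ t → φ^[k] t ≤ a * t) (x : X) :
    Bornology.IsBounded (orbitOf T x) := by
  set f : ℕ → X := fun l => T^[l] x
  have hbdd : ∀ n, Bornology.IsBounded (f '' Icc 0 n) := fun n =>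
    ((finite_Icc 0 n).image f).isBounded
  have hdiam : ∀ n, k ≤ n → diam (f '' Icc 0 n) ≤ diam (f '' Icc 0 k) / (1 - a) := by
    intro n hkn
    rw [le_div_iff₀ (sub_pos.2 ha)]
    have hsplit : f '' Icc 0 n = f '' Icc 0 k ∪ f '' Icc k n := by
      rw [← image_union, Icc_union_Icc_eq_Icc (Nat.zero_le k) hkn]
    have : diam (f '' Icc 0 n) ≤ diam (f '' Icc 0 k) + a * diam (f '' Icc 0 n) :=
      calc diam (f '' Icc 0 n) ≤ diam (f '' Icc 0 k) + diam (f '' Icc k n) := by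
            rw [hsplit]
            exact diam_union' ⟨f k, ⟨k, ⟨k.zero_le, le_rfl⟩, rfl⟩, ⟨k, ⟨le_rfl, hkn⟩, rfl⟩⟩
        _ ≤ diam (f '' Icc 0 k) + a * diam (f '' Icc 0 n) := by
            grw [hT.diam_image_iterate_Icc_le hφ (hbdd n) subset_rfl k, hk _ diam_nonneg]
    linarith
  refine isBounded_iff.2 ⟨diam (f '' Icc 0 k) / (1 - a), ?_⟩
  rintro _ ⟨i, rfl⟩ _ ⟨j, rfl⟩
  calc dist (f i) (f j) ≤ diam (f '' Icc 0 (max (max i j) k)) :=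
        dist_le_diam_of_mem (hbdd _) ⟨i, ⟨i.zero_le, by omega⟩, rfl⟩
          ⟨j, ⟨j.zero_le, by omega⟩, rfl⟩
    _ ≤ _ := hdiam _ (le_max_right _ _)

theorem cauchySeq_iterate (hT : IsStrongQuasicontraction φ T) (hφ : IsComparisonFn φ) {x : X}
    (hx : Bornology.IsBounded (orbitOf T x)) {c : ℕ → ℝ} (hc : Tendsto c atTop (𝓝 0))
    (hφc : ∀ n t, 0 ≤ t → φ^[n] t ≤ c n * t) : CauchySeq fun n => T^[n] x := by
  refine cauchySeq_of_le_tendsto_0 (fun m => c m * diam (orbitOf T x))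
    (fun i j m hi hj => ?_) (by simpa using hc.mul_const (diam (orbitOf T x)))
  calc dist (T^[i] x) (T^[j] x) ≤ diam ((fun l => T^[l] x) '' Icc m (max i j)) :=
        dist_le_diam_of_mem ((finite_Icc _ _).image _).isBounded
          ⟨i, ⟨hi, le_max_left i j⟩, rfl⟩ ⟨j, ⟨hj, le_max_right i j⟩, rfl⟩
    _ ≤ φ^[m] (diam (orbitOf T x)) :=
        hT.diam_image_iterate_Icc_le hφ hx (image_subset_range _ _) m
    _ ≤ c m * diam (orbitOf T x) := hφc m _ diam_nonneg

theorem isFixedPt_of_tendsto (hT : IsStrongQuasicontraction φ T) (hφ : IsComparisonFn φ)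
    {x p : X} (hp : Tendsto (fun n => T^[n] x) atTop (𝓝 p)) : IsFixedPt T p := by
  set f : ℕ → X := fun n => T^[n] x
  have hp' : Tendsto (fun n => f (n + 1)) atTop (𝓝 p) := hp.comp (tendsto_add_atTop_nat 1)
  have hle : ∀ n, dist (T p) (f (n + 1)) ≤
      φ (dist p (T p) + dist p (f n) + dist (f n) (f (n + 1))) := fun n =>
    calc dist (T p) (f (n + 1)) = dist (T p) (T (f n)) := by simp only [f, iterate_succ_apply']
      _ ≤ φ (diam {p, f n, T p, T (f n)}) := hT p (f n)
      _ ≤ φ (dist p (T p) + dist p (f n) + dist (f n) (f (n + 1))) := by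
          refine hφ.1 diam_nonneg (mem_Ici.2 (by positivity)) ?_
          simpa only [f, iterate_succ_apply'] using
            diam_insert_insert_insert_singleton_le p (f n) (T p) (T (f n))
  have hu : Tendsto (fun n => dist p (T p) + dist p (f n) + dist (f n) (f (n + 1))) atTop
      (𝓝 (dist p (T p))) := by
    simpa only [dist_self, add_zero] using
      (tendsto_const_nhds.add ((tendsto_const_nhds (x := p)).dist hp)).add (hp.dist hp')
  have hv : Tendsto (fun n => dist (T p) (f (n + 1))) atTop (𝓝 (dist p (T p))) := by
    simpa only [dist_comm (T p)] using hp'.dist tendsto_const_nhds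
  exact (dist_eq_zero.1 <| hφ.eq_zero_of_tendsto hu (fun n => by positivity) hv hle).symm

theorem eq_of_isFixedPt (hT : IsStrongQuasicontraction φ T) (hφ : IsComparisonFn φ) {x y : X}
    (hx : IsFixedPt T x) (hy : IsFixedPt T y) : x = y := by
  by_contra hne
  have h := hT x y
  rw [hx.eq, hy.eq, insert_eq_of_mem (by simp : y ∈ ({x, y} : Set X)),
    insert_eq_of_mem (mem_insert x {y}), diam_pair] at h
  exact (hφ.2.2.2.2 _ (dist_pos.2 hne)).not_ge h

end IsStrongQuasicontraction

theorem strongQuasicontraction_fixedPoint_of_summable_general {X : Type*} [MetricSpace X]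
    [CompleteSpace X] [Nonempty X] (φ : ℝ → ℝ) (T : X → X)
    (hφ : IsComparisonFn φ) (c : ℕ → ℝ) (hc : Summable c)
    (hφc : ∀ n : ℕ, ∀ t : ℝ, 0 ≤ t → φ^[n] t ≤ c n * t)
    (hT : IsStrongQuasicontraction φ T) :
    ∃ x₀ : X, T x₀ = x₀ ∧ (∀ y : X, T y = y → y = x₀) ∧
      ∀ x : X, Filter.Tendsto (fun n : ℕ => T^[n] x) Filter.atTop (nhds x₀) := by
  obtain ⟨k, hk⟩ : ∃ k, c k < 1 :=
    (hc.tendsto_atTop_zero.eventually (gt_mem_nhds one_pos)).exists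
  have hconv : ∀ x, ∃ p, Tendsto (fun n => T^[n] x) atTop (𝓝 p) := fun x =>
    cauchySeq_tendsto_of_complete <| hT.cauchySeq_iterate hφ
      (hT.isBounded_orbitOf hφ hk (hφc k) x) hc.tendsto_atTop_zero hφc
  obtain ⟨x₀, hx₀⟩ := hconv (Classical.arbitrary X)
  have hfix : IsFixedPt T x₀ := hT.isFixedPt_of_tendsto hφ hx₀
  refine ⟨x₀, hfix, fun y hy => hT.eq_of_isFixedPt hφ hy hfix, fun x => ?_⟩
  obtain ⟨p, hp⟩ := hconv x
  rwa [hT.eq_of_isFixedPt hφ (hT.isFixedPt_of_tendsto hφ hp) hfix] at hp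

theorem strongQuasicontraction_fixedPoint_of_summable {X : Type*} [MetricSpace X]
    [CompleteSpace X] [Nonempty X] (φ : ℝ → ℝ) (T : X → X)
    (hφ : IsComparisonFn φ) (c : ℕ → ℝ) (hc0 : ∀ n, 0 ≤ c n) (hc : Summable c)
    (hφc : ∀ n : ℕ, ∀ t : ℝ, 0 ≤ t → φ^[n] t ≤ c n * t)
    (hT : IsStrongQuasicontraction φ T) :
    ∃ x₀ : X, T x₀ = x₀ ∧ (∀ y : X, T y = y → y = x₀) ∧
      ∀ x : X, Filter.Tendsto (fun n : ℕ => T^[n] x) Filter.atTop (nhds x₀) :=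
  strongQuasicontraction_fixedPoint_of_summable_general φ T hφ c hc hφc hT
end

section
/- Any strong φ-quasicontraction of a nonempty compact metric space has a unique fixed point, and the sequence of iterates at any point converges to this fixed point. -/
open Metric Set Function Filter Topology

lemma sq_exists_fixed_limit {X : Type*} [MetricSpace X] [CompactSpace X]
    (φ : ℝ → ℝ) (T : X → X)
    (hφ : IsComparisonFn φ) (hT : IsStrongQuasicontraction φ T) (x : X) :
    ∃ p : X, T p = p ∧ Tendsto (fun n : ℕ => T^[n] x) atTop (𝓝 p) := by
  obtain ⟨hmono, husc, hnn, hz, hlt⟩ := hφ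
  have hb : ∀ s : Set X, Bornology.IsBounded s := fun s =>
    (isCompact_univ.isBounded).subset (subset_univ s)
  set D : ℕ → ℝ := fun n => diam (orbitOf T (T^[n] x)) with hD
  have hDnn : ∀ n, 0 ≤ D n := fun n => diam_nonneg
  have hsub : ∀ n, orbitOf T (T^[n+1] x) ⊆ orbitOf T (T^[n] x) := by
    intro n a ha
    obtain ⟨k, rfl⟩ := ha
    refine ⟨k + 1, ?_⟩
    show T^[k+1] (T^[n] x) = T^[k] (T^[n+1] x)
    rw [← Function.iterate_add_apply, ← Function.iterate_add_apply]
    congr 1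
    omega
  have hanti : Antitone D := antitone_nat_of_succ_le fun n =>
    diam_mono (hsub n) (hb _)
  have hkey : ∀ n k : ℕ, T^[k] (T^[n+1] x) = T (T^[k] (T^[n] x)) := by
    intro n k
    rw [← Function.iterate_add_apply, ← Function.iterate_add_apply,
      ← Function.iterate_succ_apply' T (k + n) x]
    congr 1
  have hstep : ∀ n, D (n + 1) ≤ φ (D n) := by
    intro n
    refine diam_le_of_forall_dist_le (hnn _ (hDnn n)) ?_
    rintro a ⟨i, rfl⟩ b ⟨j, rfl⟩
    show dist (T^[i] (T^[n+1] x)) (T^[j] (T^[n+1] x)) ≤ φ (D n)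
    rw [hkey n i, hkey n j]
    refine (hT _ _).trans (hmono diam_nonneg (hDnn n) (diam_mono ?_ (hb _)))
    intro z hz
    simp only [mem_insert_iff, mem_singleton_iff] at hz
    rcases hz with rfl | rfl | rfl | rfl
    · exact ⟨i, rfl⟩
    · exact ⟨j, rfl⟩
    · exact ⟨i + 1, Function.iterate_succ_apply' T i (T^[n] x)⟩
    · exact ⟨j + 1, Function.iterate_succ_apply' T j (T^[n] x)⟩
  have hbdd : BddBelow (range D) := ⟨0, by rintro y ⟨n, rfl⟩; exact hDnn n⟩
  set d : ℝ := ⨅ n, D n with hdd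
  have hDtend : Tendsto D atTop (𝓝 d) := tendsto_atTop_ciInf hanti hbdd
  have hd0 : 0 ≤ d := le_ciInf hDnn
  have hdle : ∀ n, d ≤ D n := fun n => ciInf_le hbdd n
  have hdzero : d = 0 := by
    by_contra hne
    have hdpos : 0 < d := lt_of_le_of_ne hd0 (Ne.symm hne)
    have hφd : φ d < d := hlt d hdpos
    have hy1 : φ d < (φ d + d) / 2 := by linarith
    have hDin : Tendsto D atTop (𝓝[Set.Ici 0] d) := by
      rw [tendsto_nhdsWithin_iff]
      exact ⟨hDtend, Eventually.of_forall fun n => mem_Ici.mpr (hDnn n)⟩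
    have hev : ∀ᶠ n in atTop, φ (D n) < (φ d + d) / 2 :=
      hDin.eventually (husc d (mem_Ici.mpr hd0) _ hy1)
    obtain ⟨n, hn⟩ := hev.exists
    have : d ≤ φ (D n) := le_trans (hdle (n + 1)) (hstep n)
    linarith
  have hcauchy : CauchySeq fun n : ℕ => T^[n] x := by
    refine cauchySeq_of_le_tendsto_0 D ?_ (hdzero ▸ hDtend)
    intro n m N hn hm
    have hmem : ∀ k, N ≤ k → T^[k] x ∈ orbitOf T (T^[N] x) := by
      intro k hk
      refine ⟨k - N, ?_⟩
      show T^[k - N] (T^[N] x) = T^[k] x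
      rw [← Function.iterate_add_apply]
      congr 1
      omega
    exact dist_le_diam_of_mem (hb _) (hmem n hn) (hmem m hm)
  obtain ⟨p, hp⟩ := cauchySeq_tendsto_of_complete hcauchy
  have hetend : Tendsto (fun n => dist (T^[n] x) p) atTop (𝓝 0) :=
    tendsto_iff_dist_tendsto_zero.mp hp
  have hfix : T p = p := by
    by_contra hne
    have hrpos : 0 < dist p (T p) := dist_pos.mpr fun h => hne h.symm
    have hs_lb : ∀ n, dist p (T p) ≤ diam ({T^[n] x, p, T^[n+1] x, T p} : Set X) := fun n =>
      dist_le_diam_of_mem (hb _) (by simp) (by simp)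
    have hs_ub : ∀ n, diam ({T^[n] x, p, T^[n+1] x, T p} : Set X)
        ≤ dist (T^[n] x) p + dist (T^[n+1] x) p + dist p (T p) := by
      intro n
      have h1 : 0 ≤ dist (T^[n] x) p := dist_nonneg
      have h2 : 0 ≤ dist (T^[n+1] x) p := dist_nonneg
      have h3 : 0 ≤ dist p (T p) := dist_nonneg
      refine diam_le_of_forall_dist_le (by linarith) ?_
      intro a ha b hb'
      simp only [mem_insert_iff, mem_singleton_iff] at ha hb'
      rcases ha with h | h | h | h <;> rcases hb' with h' | h' | h' | h' <;> rw [h, h'] <;>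
        linarith [dist_self (T^[n] x), dist_self (T^[n+1] x), dist_self p, dist_self (T p),
          dist_triangle (T^[n] x) p (T^[n+1] x), dist_triangle (T^[n] x) p (T p),
          dist_triangle (T^[n+1] x) p (T p),
          dist_comm (T^[n] x) p, dist_comm (T^[n+1] x) p, dist_comm p (T p),
          dist_comm (T^[n] x) (T^[n+1] x), dist_comm (T^[n] x) (T p),
          dist_comm (T^[n+1] x) (T p)]
    have hupper : Tendsto (fun n => dist (T^[n] x) p + dist (T^[n+1] x) p + dist p (T p))
        atTop (𝓝 (dist p (T p))) := by
      have h4 : Tendsto (fun n => dist (T^[n+1] x) p) atTop (𝓝 0) :=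
        hetend.comp (tendsto_add_atTop_nat 1)
      have h5 := (hetend.add h4).add (tendsto_const_nhds
        (x := dist p (T p)) (f := atTop (α := ℕ)))
      simpa using h5
    have hs_tend : Tendsto (fun n => diam ({T^[n] x, p, T^[n+1] x, T p} : Set X))
        atTop (𝓝 (dist p (T p))) :=
      tendsto_of_tendsto_of_tendsto_of_le_of_le tendsto_const_nhds hupper hs_lb hs_ub
    have hφr : φ (dist p (T p)) < dist p (T p) := hlt _ hrpos
    have hy1 : φ (dist p (T p)) < (φ (dist p (T p)) + dist p (T p)) / 2 := by linarith
    have hsin : Tendsto (fun n => diam ({T^[n] x, p, T^[n+1] x, T p} : Set X))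
        atTop (𝓝[Set.Ici 0] (dist p (T p))) := by
      rw [tendsto_nhdsWithin_iff]
      exact ⟨hs_tend, Eventually.of_forall fun n => mem_Ici.mpr diam_nonneg⟩
    have hev : ∀ᶠ n in atTop,
        φ (diam ({T^[n] x, p, T^[n+1] x, T p} : Set X))
          < (φ (dist p (T p)) + dist p (T p)) / 2 :=
      hsin.eventually (husc _ (mem_Ici.mpr hrpos.le) _ hy1)
    have hdist_step : ∀ n, dist (T^[n+1] x) (T p)
        ≤ φ (diam ({T^[n] x, p, T^[n+1] x, T p} : Set X)) := by
      intro n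
      have h := hT (T^[n] x) p
      rwa [← Function.iterate_succ_apply' T n x] at h
    have hdlim : Tendsto (fun n => dist (T^[n+1] x) (T p)) atTop (𝓝 (dist p (T p))) := by
      have h1 : Tendsto (fun n : ℕ => T^[n+1] x) atTop (𝓝 p) :=
        hp.comp (tendsto_add_atTop_nat 1)
      exact h1.dist tendsto_const_nhds
    have hrley : dist p (T p) ≤ (φ (dist p (T p)) + dist p (T p)) / 2 := by
      refine le_of_tendsto hdlim ?_
      filter_upwards [hev] with n hn
      exact (hdist_step n).trans hn.le
    linarith
  exact ⟨p, hfix, hp⟩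

theorem strongQuasicontraction_fixedPoint_of_compact {X : Type*} [MetricSpace X]
    [CompactSpace X] [Nonempty X] (φ : ℝ → ℝ) (T : X → X)
    (hφ : IsComparisonFn φ) (hT : IsStrongQuasicontraction φ T) :
    ∃ x₀ : X, T x₀ = x₀ ∧ (∀ y : X, T y = y → y = x₀) ∧
      ∀ x : X, Filter.Tendsto (fun n : ℕ => T^[n] x) Filter.atTop (nhds x₀) := by
  obtain ⟨p, hfix, htend⟩ := sq_exists_fixed_limit φ T hφ hT (Classical.arbitrary X)
  have huniq : ∀ y : X, T y = y → y = p := by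
    intro y hy
    by_contra hne
    have hpos : 0 < dist y p := dist_pos.mpr hne
    have h := hT y p
    rw [hy, hfix] at h
    have hset : ({y, p, y, p} : Set X) = {y, p} := by
      ext z
      simp only [mem_insert_iff, mem_singleton_iff]
      tauto
    rw [hset, diam_pair] at h
    have := hφ.2.2.2.2 (dist y p) hpos
    linarith
  refine ⟨p, hfix, huniq, ?_⟩
  intro x
  obtain ⟨q, hqfix, hqtend⟩ := sq_exists_fixed_limit φ T hφ hT x
  rwa [huniq q hqfix] at hqtend
end
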